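/- arXiv:math/0002100 — 9 statements merged into one kernel-verified Lean document; each statement's English description precedes it below -/
import Mathlib

section
/- Let p, p' be positive integers with 1 ≤ p < p', let 1 ≤ a < p' and e ∈ {0,1}, and set a' = a + ⌊a·p/p'⌋ + e. Then ⌊a'·p/(p'+p)⌋ = ⌊a·p/p'⌋. -/
lemma floor_int_div (n d : ℤ) (hd : 0 < d) : ⌊(n : ℚ) / (d : ℚ)⌋ = n / d := by
  have hd' : ((d.toNat : ℤ) : ℚ) = (d : ℚ) := by
    rw [Int.toNat_of_nonneg hd.le]
  rw [← hd', Int.cast_natCast, Rat.floor_intCast_div_natCast, Int.toNat_of_nonneg hd.le]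

theorem stmt0 (p p' a e : ℤ) (hp : 1 ≤ p) (hpp' : p < p')
    (ha : 1 ≤ a) (hap' : a < p') (he : e = 0 ∨ e = 1) :
    ⌊(((a + ⌊(a * p : ℚ) / (p' : ℚ)⌋ + e : ℤ) : ℚ) * (p : ℚ)) / (((p' + p : ℤ)) : ℚ)⌋
      = ⌊(a * p : ℚ) / (p' : ℚ)⌋ := by
  have hp' : 0 < p' := by linarith
  have hq : 0 < p' + p := by linarith
  have h1 : ((a * p : ℤ) : ℚ) = (a : ℚ) * (p : ℚ) := by push_cast; ring
  rw [show ((a + ⌊(a * p : ℚ) / (p' : ℚ)⌋ + e : ℤ) : ℚ) * (p : ℚ)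
      = (((a + ⌊(a * p : ℚ) / (p' : ℚ)⌋ + e) * p : ℤ) : ℚ) by push_cast; ring,
    ← h1, floor_int_div _ _ hp', floor_int_div _ _ hq]
  set b := a * p / p' with hb
  have hr := Int.emod_nonneg (a * p) hp'.ne'
  have hr2 := Int.emod_lt_of_pos (a * p) hp'
  have hdm := Int.mul_ediv_add_emod (a * p) p'
  have hbe : a * p = p' * b + (a * p) % p' := hdm.symm
  have he0 : 0 ≤ e := by rcases he with h | h <;> simp [h]
  have he1 : e ≤ 1 := by rcases he with h | h <;> simp [h]
  refine le_antisymm ?_ ?_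
  · have : (a + b + e) * p / (p' + p) < b + 1 := by
      rw [Int.ediv_lt_iff_lt_mul hq]
      nlinarith
    omega
  · rw [Int.le_ediv_iff_mul_le hq]
    nlinarith [Int.ediv_nonneg (mul_nonneg (by linarith : (0:ℤ) ≤ a) (by linarith : (0:ℤ) ≤ p)) hp'.le]
end

section
/- Let p, p' be positive integers with 1 ≤ p < p', let 1 ≤ a < p' and e ∈ {0,1}, and set a' = a + ⌊a·p/p'⌋ + e. Then ⌊(a' + (-1)^e)·p/(p'+p)⌋ = ⌊a'·p/(p'+p)⌋. -/
theorem stmt1 (p p' a : ℤ) (e : ℕ) (hp : 1 ≤ p) (hpp' : p < p')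
    (ha : 1 ≤ a) (hap' : a < p') (he : e = 0 ∨ e = 1) :
    ⌊(((a + ⌊(a * p : ℚ) / (p' : ℚ)⌋ + (e : ℤ) + (-1) ^ e : ℤ) : ℚ) * (p : ℚ)) / (((p' + p : ℤ)) : ℚ)⌋
      = ⌊(((a + ⌊(a * p : ℚ) / (p' : ℚ)⌋ + (e : ℤ) : ℤ) : ℚ) * (p : ℚ)) / (((p' + p : ℤ)) : ℚ)⌋ := by
  set f := ⌊(a * p : ℚ) / (p' : ℚ)⌋ with hf
  have hp'0 : (0:ℚ) < (p':ℚ) := by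
    have h1 : (1:ℤ) < p' := lt_of_le_of_lt hp hpp'
    exact_mod_cast lt_trans one_pos h1
  have hpq : (1:ℚ) ≤ (p:ℚ) := by exact_mod_cast hp
  have hd0 : (0:ℚ) < ((p' + p : ℤ):ℚ) := by push_cast; linarith
  have h1 : (f:ℚ) * p' ≤ (a:ℚ) * p := by
    have h := Int.floor_le ((a * p : ℚ) / (p' : ℚ))
    rw [le_div_iff₀ hp'0] at h
    push_cast at h ⊢; linarith
  have h2 : (a:ℚ) * p < ((f:ℚ) + 1) * p' := by
    have h := Int.lt_floor_add_one ((a * p : ℚ) / (p' : ℚ))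
    rw [div_lt_iff₀ hp'0] at h
    push_cast at h ⊢; linarith
  have key : ∀ N : ℤ, (f:ℚ) * ((p' + p : ℤ):ℚ) ≤ (N:ℚ) * p →
      (N:ℚ) * p < ((f:ℚ) + 1) * ((p' + p : ℤ):ℚ) →
      ⌊((N:ℤ):ℚ) * (p:ℚ) / (((p' + p : ℤ)) : ℚ)⌋ = f := by
    intro N hlo hhi
    rw [Int.floor_eq_iff]
    constructor
    · rw [le_div_iff₀ hd0]; exact hlo
    · rw [div_lt_iff₀ hd0]; push_cast at hhi ⊢; linarith
  rcases he with rfl | rfl <;>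
  · rw [key _ (by push_cast; nlinarith) (by push_cast; nlinarith),
       key _ (by push_cast; nlinarith) (by push_cast; nlinarith)]
end

section
/- Let p, p' be positive integers with 1 ≤ p < p', let 1 ≤ a, b < p', e, f ∈ {0,1}, and set a' = a + ⌊a·p/p'⌋ + e and b' = b + ⌊b·p/p'⌋ + f. Define α^{P,P'}_{A,B} = B - A and β^{P,P'}_{A,B,E,F} = ⌊B·P/P'⌋ - ⌊A·P/P'⌋ + F - E. Then α^{p,p'+p}_{a',b'} = α^{p,p'}_{a,b} + β^{p,p'}_{a,b,e,f} and β^{p,p'+p}_{a',b',e,f} = β^{p,p'}_{a,b,e,f}. -/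
lemma aux4 (p p' x ε : ℤ) (hp : 1 ≤ p) (hpp' : p < p')
    (hx : 1 ≤ x) (hε : ε = 0 ∨ ε = 1) :
    ⌊(((x + ⌊(x * p : ℚ) / (p' : ℚ)⌋ + ε : ℤ) : ℚ) * (p : ℚ)) / (((p' + p : ℤ)) : ℚ)⌋
      = ⌊(x * p : ℚ) / (p' : ℚ)⌋ := by
  set k : ℤ := ⌊(x * p : ℚ) / (p' : ℚ)⌋ with hk
  have hp'0 : (0 : ℚ) < (p' : ℚ) := by exact_mod_cast (by omega : (0:ℤ) < p')
  have h1 : (k : ℚ) ≤ (x * p : ℚ) / (p' : ℚ) := Int.floor_le _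
  have h2 : (x * p : ℚ) / (p' : ℚ) < k + 1 := Int.lt_floor_add_one _
  have hl : (k : ℚ) * p' ≤ (x : ℚ) * p := by
    rw [le_div_iff₀ hp'0] at h1; push_cast at h1 ⊢; linarith
  have hu : (x : ℚ) * p < ((k : ℚ) + 1) * p' := by
    rw [div_lt_iff₀ hp'0] at h2; push_cast at h2 ⊢; linarith
  have hlZ : k * p' ≤ x * p := by exact_mod_cast hl
  have huZ : x * p < (k + 1) * p' := by exact_mod_cast hu
  rw [Int.floor_eq_iff]
  push_cast
  have hs0 : (0 : ℚ) < (p' : ℚ) + (p : ℚ) := by exact_mod_cast (by omega : (0:ℤ) < p' + p)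
  constructor
  · rw [le_div_iff₀ hs0]
    have : k * (p' + p) ≤ (x + k + ε) * p := by rcases hε with h | h <;> nlinarith
    push_cast; exact_mod_cast this
  · rw [div_lt_iff₀ hs0]
    have : (x + k + ε) * p < (k + 1) * (p' + p) := by rcases hε with h | h <;> nlinarith
    push_cast; exact_mod_cast this

theorem stmt4 (p p' a b e f : ℤ) (hp : 1 ≤ p) (hpp' : p < p')
    (ha : 1 ≤ a) (hap' : a < p') (hb : 1 ≤ b) (hbp' : b < p')
    (he : e = 0 ∨ e = 1) (hf : f = 0 ∨ f = 1) :
    ((b + ⌊(b * p : ℚ) / (p' : ℚ)⌋ + f) - (a + ⌊(a * p : ℚ) / (p' : ℚ)⌋ + e)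
        = (b - a) + (⌊(b * p : ℚ) / (p' : ℚ)⌋ - ⌊(a * p : ℚ) / (p' : ℚ)⌋ + f - e)) ∧
    (⌊(((b + ⌊(b * p : ℚ) / (p' : ℚ)⌋ + f : ℤ) : ℚ) * (p : ℚ)) / (((p' + p : ℤ)) : ℚ)⌋
        - ⌊(((a + ⌊(a * p : ℚ) / (p' : ℚ)⌋ + e : ℤ) : ℚ) * (p : ℚ)) / (((p' + p : ℤ)) : ℚ)⌋
        + f - e
      = ⌊(b * p : ℚ) / (p' : ℚ)⌋ - ⌊(a * p : ℚ) / (p' : ℚ)⌋ + f - e) := by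
  refine ⟨by ring, ?_⟩
  rw [aux4 p p' a e hp hpp' ha he, aux4 p p' b f hp hpp' hb hf]
end

section
/- Let p', p be coprime positive integers with 0 < p < p'. For each r with 1 ≤ r < p, the band lying between heights ⌊r·p'/p⌋ and ⌊r·p'/p⌋ + 1 is odd; that is, ⌊⌊r·p'/p⌋·p/p'⌋ ≠ ⌊(⌊r·p'/p⌋+1)·p/p'⌋. -/
theorem stmt7 (p p' : ℤ) (hp : 0 < p) (hpp' : p < p') (hcop : IsCoprime p p') :
    ∀ r : ℤ, 1 ≤ r → r < p →
      ⌊((⌊(r * p' : ℚ) / (p : ℚ)⌋ : ℚ) * (p : ℚ)) / (p' : ℚ)⌋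
        ≠ ⌊(((⌊(r * p' : ℚ) / (p : ℚ)⌋ + 1 : ℤ) : ℚ) * (p : ℚ)) / (p' : ℚ)⌋ := by
  intro r hr1 hrp
  have hp' : (0:ℤ) < p' := lt_trans hp hpp'
  have hpQ : (0:ℚ) < (p:ℚ) := by exact_mod_cast hp
  have hp'Q : (0:ℚ) < (p':ℚ) := by exact_mod_cast hp'
  set h : ℤ := ⌊(r * p' : ℚ) / (p : ℚ)⌋ with hh
  -- basic bounds: h*p ≤ r*p' < (h+1)*p
  have h1 : (h:ℚ) ≤ (r * p' : ℚ) / (p:ℚ) := Int.floor_le _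
  have h2 : (r * p' : ℚ) / (p:ℚ) < h + 1 := Int.lt_floor_add_one _
  have hle : h * p ≤ r * p' := by
    have : (h:ℚ) * p ≤ (r:ℚ) * p' := by
      have := mul_le_mul_of_nonneg_right h1 (le_of_lt hpQ)
      rw [div_mul_cancel₀] at this
      · exact_mod_cast this
      · exact ne_of_gt hpQ
    exact_mod_cast this
  have hlt : r * p' < (h + 1) * p := by
    have : (r:ℚ) * p' < ((h:ℚ) + 1) * p := by
      have := mul_lt_mul_of_pos_right h2 hpQ
      rw [div_mul_cancel₀] at this
      · exact_mod_cast this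
      · exact ne_of_gt hpQ
    exact_mod_cast this
  -- 1 ≤ h
  have hpos : 1 ≤ h := by
    have hle' : p ≤ r * p' := by
      calc p ≤ p' := le_of_lt hpp'
        _ = 1 * p' := (one_mul _).symm
        _ ≤ r * p' := mul_le_mul_of_nonneg_right hr1 (le_of_lt hp')
    rw [hh, Int.le_floor]
    rw [le_div_iff₀ hpQ]
    push_cast
    have : (p:ℚ) ≤ (r:ℚ) * (p':ℚ) := by exact_mod_cast hle'
    linarith
  -- h < p'
  have hhp' : h < p' := by
    have : h * p < p * p' := lt_of_le_of_lt hle (by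
      have := mul_lt_mul_of_pos_right hrp hp'
      linarith)
    nlinarith
  -- strict: h*p < r*p' using coprimality
  have hstrict : h * p < r * p' := by
    rcases lt_or_eq_of_le hle with hlt' | heq
    · exact hlt'
    · exfalso
      have hdvd : p' ∣ h * p := ⟨r, by linarith [heq]⟩
      have : p' ∣ h := (hcop.symm.dvd_of_dvd_mul_right) hdvd
      have := Int.le_of_dvd (by linarith) this
      omega
  -- conclude
  have hA : ⌊((h:ℚ) * p) / (p':ℚ)⌋ < r := by
    rw [Int.floor_lt]
    rw [div_lt_iff₀ hp'Q]
    exact_mod_cast hstrict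
  have hB : r ≤ ⌊(((h + 1 : ℤ):ℚ) * p) / (p':ℚ)⌋ := by
    rw [Int.le_floor]
    rw [le_div_iff₀ hp'Q]
    push_cast
    have : (r:ℚ) * p' < ((h:ℚ) + 1) * p := by exact_mod_cast hlt
    linarith
  omega
end

section
/- Let p', p be coprime positive integers with 0 < p < p', and let y_k, z_k be the continued fraction convergent data of p'/p (so y_{n+1} = p', z_{n+1} = p, and y_n·z_{n+1} - y_{n+1}·z_n = (-1)^{n+1}, equivalently y_n·z_{n+1} = y_{n+1}·z_n + (-1)^n). Then for all integers s with 1 ≤ s ≤ y_n - 1, ⌊s·z_n/y_n⌋ = ⌊s·z_{n+1}/y_{n+1}⌋. -/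
lemma floor_int_div_s9 (a b : ℤ) (hb : 0 < b) : ⌊(a : ℚ) / (b : ℚ)⌋ = a / b := by
  have h : b = (b.toNat : ℤ) := (Int.toNat_of_nonneg hb.le).symm
  rw [h]
  exact_mod_cast Rat.floor_intCast_div_natCast a b.toNat

theorem stmt9 (n : ℕ) (yn yn1 zn zn1 : ℤ)
    (hz : 0 < zn1) (hzy : zn1 < yn1) (hcop : IsCoprime zn1 yn1)
    (hdet : yn * zn1 = yn1 * zn + (-1) ^ n)
    (hyn : 1 ≤ yn) (hlt : yn < yn1) :
    ∀ s : ℤ, 1 ≤ s → s ≤ yn - 1 →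
      ⌊(s * zn : ℚ) / (yn : ℚ)⌋ = ⌊(s * zn1 : ℚ) / (yn1 : ℚ)⌋ := by
  intro s hs1 hs2
  have hyn0 : (0:ℤ) < yn := by linarith
  have hyn10 : (0:ℤ) < yn1 := by linarith
  have h1 : ((s * zn : ℤ) : ℚ) / (yn : ℚ) = ((s * zn : ℤ) : ℚ) / ((yn : ℤ) : ℚ) := by
    push_cast; ring
  have h2 : ((s * zn1 : ℤ) : ℚ) / (yn1 : ℚ) = ((s * zn1 : ℤ) : ℚ) / ((yn1 : ℤ) : ℚ) := by
    push_cast; ring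
  have hf1 : ⌊(s * zn : ℚ) / (yn : ℚ)⌋ = (s * zn) / yn := by
    rw [show ((s:ℚ) * zn) = ((s * zn : ℤ) : ℚ) by push_cast; ring]
    exact floor_int_div_s9 _ _ hyn0
  have hf2 : ⌊(s * zn1 : ℚ) / (yn1 : ℚ)⌋ = (s * zn1) / yn1 := by
    rw [show ((s:ℚ) * zn1) = ((s * zn1 : ℤ) : ℚ) by push_cast; ring]
    exact floor_int_div_s9 _ _ hyn10
  rw [hf1, hf2]
  -- integer part
  set q := (s * zn1) / yn1 with hq
  set r := (s * zn1) % yn1 with hr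
  have hdm : yn1 * q + r = s * zn1 := Int.mul_ediv_add_emod (s * zn1) yn1
  have hr0 : 0 ≤ r := Int.emod_nonneg _ (by positivity)
  have hrlt : r < yn1 := Int.emod_lt_of_pos _ hyn10
  have hrne : r ≠ 0 := by
    intro h0
    have hdvd : yn1 ∣ s * zn1 := Int.dvd_of_emod_eq_zero h0
    have hdvds : yn1 ∣ s := (hcop.symm).dvd_of_dvd_mul_right hdvd
    have := Int.le_of_dvd (by linarith) hdvds
    linarith
  have hr1 : 1 ≤ r := lt_of_le_of_ne hr0 (Ne.symm hrne)
  -- key identity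
  set e : ℤ := (-1) ^ n with he
  have hee : e = 1 ∨ e = -1 := by
    rcases Nat.even_or_odd n with h | h
    · left; exact h.neg_one_pow
    · right; exact h.neg_one_pow
  have hkey : yn1 * (s * zn - yn * q) = yn * r - s * e := by
    have := hdet
    nlinarith [hdm]
  have hD1 : 1 ≤ yn * r - s * e := by
    rcases hee with h | h <;> rw [h] <;> nlinarith
  have hD2 : yn * r - s * e ≤ yn * yn1 - 1 := by
    rcases hee with h | h <;> rw [h] <;> nlinarith
  have ht0 : 0 ≤ s * zn - yn * q := by nlinarith
  have htlt : s * zn - yn * q < yn := by nlinarith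
  have : s * zn = (s * zn - yn * q) + yn * q := by ring
  rw [this, Int.add_mul_ediv_left _ _ (ne_of_gt hyn0),
    Int.ediv_eq_zero_of_lt ht0 htlt, zero_add]
end

section
/- For nonnegative integers k and m, the generating function of partitions with at most k parts, each part at most m, weighted by the sum of parts, equals the Gaussian binomial coefficient [m+k choose m]_q. -/
/-- The q-Pochhammer symbol `(q)_n = ∏_{i=1}^n (1 - qⁱ)` in the field of rational
functions over `ℚ`, with `q = X`. -/
noncomputable def qp (n : ℕ) : RatFunc ℚ :=
  ∏ i ∈ Finset.range n, (1 - RatFunc.X ^ (i + 1))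

/-- The Gaussian binomial coefficient `[A choose B]_q = (q)_A / ((q)_{A-B} (q)_B)`. -/
noncomputable def gaussBinom (A B : ℕ) : RatFunc ℚ :=
  if B ≤ A then qp A / (qp (A - B) * qp B) else 0

lemma one_sub_X_pow_ne_zero (i : ℕ) : (1 : RatFunc ℚ) - RatFunc.X ^ (i + 1) ≠ 0 := by
  rw [sub_ne_zero]
  intro h
  have : (RatFunc.X : RatFunc ℚ) ^ (i+1) = algebraMap (Polynomial ℚ) _ (Polynomial.X ^ (i+1)) := by
    simp [RatFunc.algebraMap_X]
  rw [this] at h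
  have h1 : (algebraMap (Polynomial ℚ) (RatFunc ℚ)) 1 = 1 := map_one _
  rw [← h1] at h
  have := RatFunc.algebraMap_injective ℚ h.symm
  have := congrArg Polynomial.natDegree this
  simp at this

lemma qp_ne_zero (n : ℕ) : qp n ≠ 0 := by
  unfold qp
  exact Finset.prod_ne_zero_iff.mpr fun i _ => one_sub_X_pow_ne_zero i

lemma qp_succ (n : ℕ) : qp (n+1) = qp n * (1 - RatFunc.X ^ (n+1)) := by
  unfold qp; rw [Finset.prod_range_succ]

lemma qp_zero : qp 0 = 1 := by simp [qp]

lemma gauss_self (A : ℕ) : gaussBinom A A = 1 := by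
  simp [gaussBinom, qp_zero, div_self (qp_ne_zero A)]

lemma gauss_zero (A : ℕ) : gaussBinom A 0 = 1 := by
  simp [gaussBinom, qp_zero, div_self (qp_ne_zero A)]

lemma gauss_pascal (A B : ℕ) (h : B ≤ A) :
    gaussBinom (A+1) (B+1) = gaussBinom A B + RatFunc.X ^ (B+1) * gaussBinom A (B+1) := by
  rcases eq_or_lt_of_le h with rfl | hlt
  · rw [gauss_self, gauss_self]
    have : gaussBinom B (B+1) = 0 := by simp [gaussBinom]
    rw [this]; ring
  · obtain ⟨d, rfl⟩ : ∃ d, A = B + 1 + d := ⟨A - (B+1), by omega⟩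
    have e1 : B + 1 + d + 1 - (B + 1) = d + 1 := by omega
    have e2 : B + 1 + d - B = d + 1 := by omega
    have e3 : B + 1 + d - (B + 1) = d := by omega
    rw [gaussBinom, gaussBinom, gaussBinom, if_pos (by omega), if_pos (by omega), if_pos (by omega),
      e1, e2, e3]
    rw [show B + 1 + d + 1 = (B + 1 + d) + 1 by ring, qp_succ (B+1+d), qp_succ d, qp_succ B]
    have h1 := qp_ne_zero (B+1+d)
    have h2 := qp_ne_zero d
    have h3 := qp_ne_zero B
    have h4 := one_sub_X_pow_ne_zero d
    have h5 := one_sub_X_pow_ne_zero B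
    field_simp
    ring

open scoped Classical in
noncomputable def Sgen (k m : ℕ) : RatFunc ℚ :=
  ∑ f ∈ Finset.univ.filter (fun f : Fin k → Fin (m + 1) => Antitone f),
    (RatFunc.X : RatFunc ℚ) ^ (∑ i, (f i : ℕ))

lemma Sgen_zero (m : ℕ) : Sgen 0 m = 1 := by
  classical
  rw [Sgen]
  rw [Finset.sum_eq_single_of_mem (fun _ => 0)]
  · simp
  · exact Finset.mem_filter.mpr ⟨Finset.mem_univ _, fun i j h => le_refl _⟩
  · intro b _ hb; exact absurd (funext fun i => absurd i.2 (by omega)) hb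

lemma Sgen_m_zero (k : ℕ) : Sgen k 0 = 1 := by
  classical
  rw [Sgen]
  rw [Finset.sum_eq_single_of_mem (fun _ => 0)]
  · simp
  · exact Finset.mem_filter.mpr ⟨Finset.mem_univ _, fun i j h => le_refl _⟩
  · intro b _ hb
    refine absurd (funext fun i => ?_) hb
    have := (b i).2
    exact Fin.ext (by omega)

lemma Sgen_rec (k m : ℕ) :
    Sgen (k+1) (m+1) = Sgen (k+1) m + RatFunc.X ^ (m+1) * Sgen k (m+1) := by
  classical
  rw [Sgen]
  rw [← Finset.sum_filter_add_sum_filter_not _ (fun f : Fin (k+1) → Fin (m+2) => f 0 ≠ Fin.last (m+1))]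
  congr 1
  · -- f 0 ≠ last : corresponds to Sgen (k+1) m
    rw [Sgen, Finset.filter_filter]
    refine Finset.sum_bij' (i := fun f hf => fun j => Fin.castPred (f j) ?_)
      (j := fun g _ => fun j => Fin.castSucc (g j)) ?_ ?_ ?_ ?_ ?_
    · -- f j ≠ last
      simp only [Finset.mem_filter] at hf
      intro hj
      exact hf.2.2 (le_antisymm (Fin.le_last _) (hj ▸ hf.2.1 (Fin.zero_le j)))
    · intro f hf
      simp only [Finset.mem_filter] at hf ⊢
      refine ⟨Finset.mem_univ _, fun i j hij => ?_⟩
      have := hf.2.1 hij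
      simp only [Fin.le_def, Fin.coe_castPred]
      exact this
    · intro g hg
      simp only [Finset.mem_filter] at hg ⊢
      refine ⟨Finset.mem_univ _, fun i j hij => ?_, ?_⟩
      · exact Fin.castSucc_le_castSucc_iff.mpr (hg.2 hij)
      · intro h
        have := congrArg Fin.val h
        simp [Fin.last] at this
        omega
    · intro f hf; funext j; simp
    · intro g hg; funext j; simp
    · intro f hf
      congr 1
  · -- f 0 = last : corresponds to X^(m+1) * Sgen k (m+1)
    rw [Sgen, Finset.mul_sum, Finset.filter_filter]
    refine Finset.sum_bij' (i := fun f _ => Fin.tail f)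
      (j := fun g _ => Fin.cons (Fin.last (m+1)) g) ?_ ?_ ?_ ?_ ?_
    · intro f hf
      simp only [Finset.mem_filter] at hf ⊢
      refine ⟨Finset.mem_univ _, fun i j hij => hf.2.1 (Fin.succ_le_succ_iff.mpr hij)⟩
    · intro g hg
      simp only [Finset.mem_filter] at hg ⊢
      refine ⟨Finset.mem_univ _, fun i j hij => ?_, ?_⟩
      · induction i using Fin.cases with
        | zero => simp [Fin.le_last]
        | succ i =>
          have hj0 : j ≠ 0 := by
            intro h; subst h
            exact absurd (le_antisymm hij (Fin.zero_le _)) (Fin.succ_ne_zero i)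
          obtain ⟨j', rfl⟩ := Fin.exists_succ_eq.mpr hj0
          simp only [Fin.cons_succ]
          exact hg.2 (Fin.succ_le_succ_iff.mp hij)
      · simp
    · intro f hf
      simp only [Finset.mem_filter, not_not] at hf
      funext j
      induction j using Fin.cases with
      | zero => simp [hf.2.2]
      | succ i => simp [Fin.tail]
    · intro g hg; exact Fin.tail_cons _ _
    · intro f hf
      simp only [Finset.mem_filter, not_not] at hf
      rw [← pow_add]
      congr 1
      rw [Fin.sum_univ_succ, hf.2.2]
      simp [Fin.tail, Fin.last]

lemma Sgen_eq_gauss (k m : ℕ) : Sgen k m = gaussBinom (m + k) m := by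
  induction k generalizing m with
  | zero => rw [Sgen_zero, Nat.add_zero, gauss_self]
  | succ k ih =>
    induction m with
    | zero => rw [Sgen_m_zero, gauss_zero]
    | succ m ihm =>
      rw [Sgen_rec, ihm, ih (m+1),
        show m + (k+1) = m+1+k by omega, show (m+1) + (k+1) = (m+1+k)+1 by omega,
        gauss_pascal (m+1+k) m (by omega)]

open scoped Classical in
/-- The generating function of partitions with at most `k` parts, each part at most `m`
(encoded as antitone tuples of length `k` with entries in `{0,…,m}`), weighted by the
sum of parts, is the Gaussian binomial `[m+k choose m]_q`. -/
theorem stmt10 (k m : ℕ) :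
    (∑ f ∈ Finset.univ.filter (fun f : Fin k → Fin (m + 1) => Antitone f),
        (RatFunc.X : RatFunc ℚ) ^ (∑ i, (f i : ℕ)))
      = gaussBinom (m + k) m := by
  exact Sgen_eq_gauss k m
end

section
/- Let p'/p (coprime, 0 < p < p') have continued fraction (c₀, c₁, ..., c_n) with c₀ = 1 and n ≥ 1, so p'/(p'-p) has continued fraction (c₁+1, c₂, ..., c_n). Let y_k, z_k (resp. y'_k, z'_k) denote the convergent data for p'/p (resp. p'/(p'-p)). Then y_k = y'_{k-1} and z_k = y'_{k-1} - z'_{k-1} for all 1 ≤ k ≤ n. -/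
/-- The value of a finite continued fraction `[c₀; c₁, …]`. -/
def cfVal : List ℚ → ℚ
  | [] => 0
  | [x] => x
  | x :: xs => x + 1 / cfVal xs

theorem stmt13 (p p' : ℤ) (n : ℕ) (c : ℕ → ℤ) (y z y' z' : ℕ → ℤ)
    (hp : 0 < p) (hpp' : p < p') (hcop : IsCoprime p p') (hn : 1 ≤ n)
    (hc0 : c 0 = 1) (hci : ∀ i, 0 < i → i < n → 1 ≤ c i) (hcn : 2 ≤ c n)
    (hcf : (p' : ℚ) / (p : ℚ) = cfVal (List.ofFn fun i : Fin (n + 1) => (c i : ℚ)))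
    (hy0 : y 0 = 0) (hy1 : y 1 = 1) (hz0 : z 0 = 1) (hz1 : z 1 = 0)
    (hy : ∀ k, 1 ≤ k → k ≤ n + 1 → y (k + 1) = c (k - 1) * y k + y (k - 1))
    (hz : ∀ k, 1 ≤ k → k ≤ n + 1 → z (k + 1) = c (k - 1) * z k + z (k - 1))
    (hy'0 : y' 0 = 0) (hy'1 : y' 1 = 1) (hz'0 : z' 0 = 1) (hz'1 : z' 1 = 0)
    (hy' : ∀ k, 1 ≤ k → k ≤ n →
      y' (k + 1) = (if k - 1 = 0 then c 1 + 1 else c k) * y' k + y' (k - 1))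
    (hz' : ∀ k, 1 ≤ k → k ≤ n →
      z' (k + 1) = (if k - 1 = 0 then c 1 + 1 else c k) * z' k + z' (k - 1)) :
    ∀ k, 1 ≤ k → k ≤ n → y (k + 1) = y' k ∧ z (k + 1) = y' k - z' k := by
  intro k
  induction k using Nat.strong_induction_on with
  | _ k ih =>
    intro h1 h2
    match k, h1 with
    | 1, _ =>
      have e1 := hy 1 le_rfl (by omega)
      have e2 := hz 1 le_rfl (by omega)
      simp [hy0, hy1, hz0, hz1, hc0] at e1 e2
      exact ⟨by rw [e1, hy'1], by rw [e2, hy'1, hz'1]; ring⟩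
    | 2, _ =>
      have e1 := hy 1 le_rfl (by omega)
      have e2 := hz 1 le_rfl (by omega)
      simp [hy0, hy1, hz0, hz1, hc0] at e1 e2
      have f1 := hy 2 (by omega) (by omega)
      have f2 := hz 2 (by omega) (by omega)
      have g1 := hy' 1 le_rfl (by omega)
      have g2 := hz' 1 le_rfl (by omega)
      simp [hy'0, hy'1, hz'0, hz'1] at g1 g2
      simp at f1 f2
      rw [e1, hy1] at f1
      rw [e2, hz1] at f2
      exact ⟨by rw [f1, g1]; ring, by rw [f2, g1, g2]; ring⟩
    | (m+3), _ =>
      have hm2 : m + 3 ≤ n := h2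
      obtain ⟨ih1y, ih1z⟩ := ih (m+2) (by omega) (by omega) (by omega)
      obtain ⟨ih2y, ih2z⟩ := ih (m+1) (by omega) (by omega) (by omega)
      have f1 := hy (m+3) (by omega) (by omega)
      have f2 := hz (m+3) (by omega) (by omega)
      have g1 := hy' (m+2) (by omega) (by omega)
      have g2 := hz' (m+2) (by omega) (by omega)
      simp at f1 f2 g1 g2
      constructor
      · rw [f1, g1, ih1y, ih2y]
      · rw [f2, g1, g2, ih1z, ih2z]; ring
end

section
/- Let p'/p (coprime, 0 < p < p') have continued fraction (c₀,...,c_n), rank t = c₀+⋯+c_n-2, zone boundaries t_k = -1 + Σ_{i<k} c_i, and Takahashi lengths κ_j = y_{k-1} + (j - t_k)·y_k, truncated Takahashi lengths κ̃_j = z_{k-1} + (j - t_k)·z_k for t_k < j ≤ t_{k+1}. Then for t₁ ≤ j ≤ t with zone index k = ζ(j) (i.e., t_k < j ≤ t_{k+1}), ⌊κ̃_j · p'/p⌋ = κ_j - [k ≡ 1 (mod 2)], where [·] is 1 if the condition holds and 0 otherwise. -/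
def gseq (c : ℕ → ℤ) (n : ℕ) : ℕ → ℤ
  | 0 => 0
  | 1 => 1
  | (i+2) => c (n - i) * gseq c n (i+1) + gseq c n i

lemma cfVal_cons (x : ℚ) (xs : List ℚ) (h : xs ≠ []) :
    cfVal (x :: xs) = x + 1 / cfVal xs := by
  cases xs with
  | nil => exact absurd rfl h
  | cons a l => rfl

section g
variable (c : ℕ → ℤ) (n : ℕ)

lemma gseq_nonneg (hc0 : 0 ≤ c 0) (hc1 : ∀ i, 1 ≤ i → i ≤ n → 1 ≤ c i) :
    ∀ i, 0 ≤ gseq c n i := by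
  intro i
  induction i using Nat.strong_induction_on with
  | _ i ih =>
    match i with
    | 0 => simp [gseq]
    | 1 => simp [gseq]
    | (i+2) =>
      have h1 := ih (i+1) (by omega)
      have h0 := ih i (by omega)
      have hc : 0 ≤ c (n - i) := by
        rcases Nat.eq_zero_or_pos (n - i) with h | h
        · rw [h]; exact hc0
        · have := hc1 (n - i) h (Nat.sub_le n i); omega
      show 0 ≤ c (n - i) * gseq c n (i+1) + gseq c n i
      have := mul_nonneg hc h1
      linarith

lemma gseq_pos (hc0 : 0 ≤ c 0) (hc1 : ∀ i, 1 ≤ i → i ≤ n → 1 ≤ c i) :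
    ∀ i, 1 ≤ i → i ≤ n + 1 → 1 ≤ gseq c n i := by
  intro i
  induction i using Nat.strong_induction_on with
  | _ i ih =>
    match i with
    | 0 => omega
    | 1 => intro _ _; simp [gseq]
    | (i+2) =>
      intro _ hle
      have h1 : 1 ≤ gseq c n (i+1) := ih (i+1) (by omega) (by omega) (by omega)
      have h0 : 0 ≤ gseq c n i := gseq_nonneg c n hc0 hc1 i
      have hc : 1 ≤ c (n - i) := hc1 (n - i) (by omega) (Nat.sub_le n i)
      show 1 ≤ c (n - i) * gseq c n (i+1) + gseq c n i
      nlinarith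

lemma gseq_step (hc0 : 0 ≤ c 0) (hc1 : ∀ i, 1 ≤ i → i ≤ n → 1 ≤ c i) :
    ∀ i, i ≤ n → gseq c n i ≤ gseq c n (i+1) := by
  intro i hi
  match i with
  | 0 => simp [gseq]
  | (j+1) =>
    have h1 : 0 ≤ gseq c n (j+1) := gseq_nonneg c n hc0 hc1 (j+1)
    have h0 : 0 ≤ gseq c n j := gseq_nonneg c n hc0 hc1 j
    have hc : 1 ≤ c (n - j) := hc1 (n - j) (by omega) (Nat.sub_le n j)
    show gseq c n (j+1) ≤ c (n - j) * gseq c n (j+1) + gseq c n j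
    nlinarith

lemma gseq_le (hc0 : 0 ≤ c 0) (hc1 : ∀ i, 1 ≤ i → i ≤ n → 1 ≤ c i) :
    ∀ a b, a ≤ b → b ≤ n + 1 → gseq c n a ≤ gseq c n b := by
  intro a b hab hb
  induction b with
  | zero => have : a = 0 := by omega
            simp [this]
  | succ b ih =>
    rcases Nat.lt_or_ge a (b+1) with h | h
    · exact le_trans (ih (by omega) (by omega)) (gseq_step c n hc0 hc1 b (by omega))
    · have : a = b + 1 := by omega
      simp [this]

lemma gseq_gap (hc0 : 0 ≤ c 0) (hc1 : ∀ i, 1 ≤ i → i ≤ n → 1 ≤ c i)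
    (hc2 : 2 ≤ c n) (hn : 1 ≤ n) :
    gseq c n n + 1 ≤ gseq c n (n+1) := by
  obtain ⟨m, rfl⟩ : ∃ m, n = m + 1 := ⟨n - 1, by omega⟩
  have h' : m + 1 - m = 1 := by omega
  have hrw : gseq c (m+1) (m+2) = c 1 * gseq c (m+1) (m+1) + gseq c (m+1) m := by
    show c (m + 1 - m) * gseq c (m+1) (m+1) + gseq c (m+1) m = _
    rw [h']
  rw [hrw]
  match m with
  | 0 =>
    have hcc : 2 ≤ c 1 := hc2
    simp [gseq]
    omega
  | (j+1) =>
    have hc : 1 ≤ c 1 := hc1 1 le_rfl (by omega)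
    have h1 : 1 ≤ gseq c (j+2) (j+2) := gseq_pos c (j+2) hc0 hc1 (j+2) (by omega) (by omega)
    have h0 : 1 ≤ gseq c (j+2) (j+1) := gseq_pos c (j+2) hc0 hc1 (j+1) (by omega) (by omega)
    nlinarith

lemma gseq_cop : ∀ i, IsCoprime (gseq c n (i+1)) (gseq c n i) := by
  intro i
  induction i with
  | zero =>
    show IsCoprime (gseq c n 1) (gseq c n 0)
    simp only [gseq]
    exact isCoprime_one_left
  | succ i ih =>
    have h : gseq c n (i+2) = gseq c n i + gseq c n (i+1) * c (n - i) := by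
      show c (n - i) * gseq c n (i+1) + gseq c n i = _
      ring
    show IsCoprime (gseq c n (i+2)) (gseq c n (i+1))
    rw [h]
    exact (ih.symm).add_mul_left_left _

lemma gseq_cf (hc0 : 0 ≤ c 0) (hc1 : ∀ i, 1 ≤ i → i ≤ n → 1 ≤ c i) :
    ∀ j, j ≤ n → cfVal (List.ofFn fun i : Fin (j+1) => (c (n - j + i) : ℚ))
      = (gseq c n (j+2) : ℚ) / (gseq c n (j+1) : ℚ) := by
  intro j
  induction j with
  | zero =>
    intro _
    have : gseq c n 2 = c n := by
      show c (n - 0) * gseq c n 1 + gseq c n 0 = c n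
      simp [gseq]
    simp [List.ofFn_succ, cfVal, this, gseq]
  | succ j ih =>
    intro hj
    have hA : (1:ℤ) ≤ gseq c n (j+2) := gseq_pos c n hc0 hc1 (j+2) (by omega) (by omega)
    have hA' : (gseq c n (j+2) : ℚ) ≠ 0 := by
      have : (0:ℚ) < (gseq c n (j+2) : ℚ) := by exact_mod_cast lt_of_lt_of_le zero_lt_one hA
      linarith
    have hlist : (List.ofFn fun i : Fin (j+2) => (c (n - (j+1) + i) : ℚ))
        = (c (n - (j+1)) : ℚ) :: (List.ofFn fun i : Fin (j+1) => (c (n - j + i) : ℚ)) := by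
      rw [List.ofFn_succ]
      refine congrArg₂ List.cons ?_ ?_
      · norm_num
      · refine congrArg List.ofFn (funext fun i => ?_)
        have h2 : n - (j+1) + ((i : ℕ) + 1) = n - j + (i : ℕ) := by omega
        simp only [Fin.val_succ]
        rw [h2]
    rw [hlist, cfVal_cons _ _ (by simp [List.ofFn_succ]), ih (by omega)]
    have hg : gseq c n (j+3) = c (n - (j+1)) * gseq c n (j+2) + gseq c n (j+1) := rfl
    rw [one_div_div, hg]
    push_cast
    field_simp

end g
lemma floor_helper (p q s : ℤ) (hp : 0 < p) (h0 : 0 ≤ s) (h1 : s < p) :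
    ⌊((q * p + s : ℤ) : ℚ) / (p : ℚ)⌋ = q := by
  have hp' : (0:ℚ) < (p:ℚ) := by exact_mod_cast hp
  have h0' : (0:ℚ) ≤ (s:ℚ) := by exact_mod_cast h0
  have h1' : (s:ℚ) < (p:ℚ) := by exact_mod_cast h1
  rw [Int.floor_eq_iff]
  constructor
  · rw [le_div_iff₀ hp']
    push_cast
    linarith
  · rw [div_lt_iff₀ hp']
    push_cast
    linarith

theorem stmt14 (p p' : ℤ) (n : ℕ) (c : ℕ → ℤ) (y z : ℕ → ℤ) (tz : ℕ → ℤ)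
    (hp : 0 < p) (hpp' : p < p') (hcop : IsCoprime p p')
    (hc0 : 0 ≤ c 0) (hci : ∀ i, 0 < i → i < n → 1 ≤ c i) (hcn : 2 ≤ c n)
    (hcf : (p' : ℚ) / (p : ℚ) = cfVal (List.ofFn fun i : Fin (n + 1) => (c i : ℚ)))
    (hy0 : y 0 = 0) (hy1 : y 1 = 1) (hz0 : z 0 = 1) (hz1 : z 1 = 0)
    (hy : ∀ k, 1 ≤ k → k ≤ n + 1 → y (k + 1) = c (k - 1) * y k + y (k - 1))
    (hz : ∀ k, 1 ≤ k → k ≤ n + 1 → z (k + 1) = c (k - 1) * z k + z (k - 1))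
    (htz : ∀ k, tz k = -1 + ∑ i ∈ Finset.range k, c i) :
    ∀ (j : ℤ) (k : ℕ), k ≤ n → tz 1 ≤ j → j ≤ tz (n + 1) - 1 →
      tz k < j → j ≤ tz (k + 1) →
      ⌊(((z k + (j - tz k) * z (k + 1)) * p' : ℤ) : ℚ) / (p : ℚ)⌋
        = y k + (j - tz k) * y (k + 1) - (if k % 2 = 1 then 1 else 0) := by
  have hc1 : ∀ i, 1 ≤ i → i ≤ n → 1 ≤ c i := by
    intro i h1 h2
    rcases eq_or_lt_of_le h2 with h | h
    · subst h; omega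
    · exact hci i h1 h
  have hBpos : (1:ℤ) ≤ gseq c n (n+1) := gseq_pos c n hc0 hc1 (n+1) (by omega) le_rfl
  have hpne : (p:ℚ) ≠ 0 := by
    have : (0:ℚ) < (p:ℚ) := by exact_mod_cast hp
    linarith
  have hBne : (gseq c n (n+1) : ℚ) ≠ 0 := by
    have : (0:ℚ) < (gseq c n (n+1) : ℚ) := by
      exact_mod_cast lt_of_lt_of_le zero_lt_one hBpos
    linarith
  have hcf' : (p' : ℚ) / (p : ℚ) = (gseq c n (n+2) : ℚ) / (gseq c n (n+1) : ℚ) := by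
    rw [hcf]
    have h := gseq_cf c n hc0 hc1 n le_rfl
    have hfun : (fun i : Fin (n+1) => (c i : ℚ)) = fun i : Fin (n+1) => (c (n - n + i) : ℚ) := by
      funext i
      have h3 : n - n + (i : ℕ) = (i : ℕ) := by omega
      rw [h3]
    rw [hfun]
    exact h
  have hZint : p' * gseq c n (n+1) = gseq c n (n+2) * p := by
    exact_mod_cast (div_eq_div_iff hpne hBne).mp hcf'
  have hp_eq : p = gseq c n (n+1) := by
    have d1 : p ∣ gseq c n (n+1) :=
      hcop.dvd_of_dvd_mul_left ⟨gseq c n (n+2), by rw [hZint]; ring⟩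
    have d2 : gseq c n (n+1) ∣ p := by
      have hcp : IsCoprime (gseq c n (n+1)) (gseq c n (n+2)) := (gseq_cop c n (n+1)).symm
      exact hcp.dvd_of_dvd_mul_left ⟨p', by rw [← hZint]; ring⟩
    exact Int.dvd_antisymm (by omega) (by omega) d1 d2
  have hp'_eq : p' = gseq c n (n+2) := by
    have h : p' * p = gseq c n (n+2) * p := by
      conv_lhs => rw [hp_eq]
      exact hZint
    exact mul_right_cancel₀ (by omega) h
  have key : ∀ k, k ≤ n + 1 → z k * p' - y k * p = (-1:ℤ)^k * gseq c n (n + 2 - k) := by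
    have main : ∀ k, (k ≤ n + 1 → z k * p' - y k * p = (-1:ℤ)^k * gseq c n (n + 2 - k)) ∧
        (k + 1 ≤ n + 1 → z (k+1) * p' - y (k+1) * p = (-1:ℤ)^(k+1) * gseq c n (n + 2 - (k+1))) := by
      intro k
      induction k with
      | zero =>
        constructor
        · intro _
          have h2 : n + 2 - 0 = n + 2 := rfl
          rw [hz0, hy0, h2, ← hp'_eq]
          ring
        · intro _
          have h2 : n + 2 - 1 = n + 1 := by omega
          rw [hz1, hy1, h2, ← hp_eq]
          ring
      | succ k ih =>
        refine ⟨ih.2, ?_⟩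
        intro h
        have e1 := ih.1 (by omega)
        have e2 := ih.2 (by omega)
        have hyk := hy (k+1) (by omega) (by omega)
        have hzk := hz (k+1) (by omega) (by omega)
        simp only [Nat.add_sub_cancel] at hyk hzk
        have i1 : n + 2 - (k + 1) = (n - k) + 1 := by omega
        have i2 : n + 2 - k = (n - k) + 2 := by omega
        have i3 : n + 2 - (k + 1 + 1) = n - k := by omega
        have i4 : n - (n - k) = k := by omega
        have hg : gseq c n ((n-k) + 2) = c k * gseq c n ((n-k)+1) + gseq c n (n-k) := by
          show c (n - (n - k)) * _ + _ = _
          rw [i4]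
        rw [i3, hyk, hzk]
        rw [i1] at e2
        rw [i2, hg] at e1
        have h1 : (-1:ℤ)^(k+1) = -(-1)^k := by ring
        rw [h1] at e2
        have h2 : (-1:ℤ)^(k+1+1) = (-1)^k := by ring
        rw [h2]
        linear_combination e1 + (c k) * e2
    intro k hk
    exact (main k).1 hk
  intro j k hk hj1 hj2 hjk hjk1
  have htzk : tz (k+1) = tz k + c k := by
    rw [htz, htz, Finset.sum_range_succ]; ring
  set m := j - tz k with hm
  have hm1 : 1 ≤ m := by omega
  have hm2 : m ≤ c k := by omega
  have e1 := key k (by omega)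
  have e2 := key (k+1) (by omega)
  have i1 : n + 2 - (k+1) = n + 1 - k := by omega
  rw [i1] at e2
  set a := gseq c n (n + 2 - k) with ha
  set b := gseq c n (n + 1 - k) with hb
  have hb0 : 0 ≤ b := gseq_nonneg c n hc0 hc1 _
  have hb1 : 1 ≤ b := gseq_pos c n hc0 hc1 _ (by omega) (by omega)
  set R := a - m * b with hR
  have hR1 : 1 ≤ R := by
    rcases eq_or_lt_of_le hk with hkn | hkn
    · subst hkn
      have ha2 : a = c k := by
        rw [ha]
        have h5 : k + 2 - k = 2 := by omega
        rw [h5]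
        show c (k - 0) * gseq c k 1 + gseq c k 0 = c k
        simp [gseq]
      have hb2 : b = 1 := by
        rw [hb]
        have h5 : k + 1 - k = 1 := by omega
        rw [h5]
        simp [gseq]
      have hm3 : m ≤ c k - 1 := by omega
      rw [hR, ha2, hb2, mul_one]
      omega
    · have hrec : a = c k * b + gseq c n (n - k) := by
        rw [ha, hb]
        have i2 : n + 2 - k = (n - k) + 2 := by omega
        rw [i2]
        show c (n - (n - k)) * gseq c n ((n-k)+1) + gseq c n (n-k) = _
        have i3 : (n - k) + 1 = n + 1 - k := by omega
        have i4 : n - (n - k) = k := by omega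
        rw [i3, i4]
      have hgnk : 1 ≤ gseq c n (n - k) := gseq_pos c n hc0 hc1 _ (by omega) (by omega)
      have hnn : 0 ≤ (c k - m) * b := mul_nonneg (by omega) hb0
      rw [hR, hrec]
      linarith
  have hR2 : R ≤ p - 1 := by
    rcases Nat.eq_zero_or_pos k with hk0 | hk0
    · subst hk0
      have hjk1' : j ≤ tz 1 := by simpa using hjk1
      have hn1 : 1 ≤ n := by
        by_contra hcon
        have hn0 : n = 0 := by omega
        rw [hn0] at hj2
        have hj2' : j ≤ tz 1 - 1 := by simpa using hj2
        omega
      have htz0 : tz 0 = -1 := by rw [htz]; simp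
      have htz1 : tz 1 = -1 + c 0 := by rw [htz]; simp
      have hmc : m = c 0 := by omega
      have hrec : a = c 0 * b + gseq c n n := by
        rw [ha, hb]
        show c (n - n) * gseq c n (n+1) + gseq c n n = _
        have i5 : n - n = 0 := by omega
        rw [i5]
        norm_num
      have hgap := gseq_gap c n hc0 hc1 hcn hn1
      rw [hR, hrec, hmc, hp_eq]
      have hbg : b = gseq c n (n+1) := hb
      rw [hbg]
      linarith
    · have hle : a ≤ gseq c n (n+1) := by
        rw [ha]; exact gseq_le c n hc0 hc1 _ _ (by omega) le_rfl
      have h1 : 1 ≤ m * b := by nlinarith [hm1, hb1]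
      rw [hR, hp_eq]
      linarith
  have hval : (z k + m * z (k+1)) * p' = (y k + m * y (k+1)) * p + (-1:ℤ)^k * R := by
    have h1 : (-1:ℤ)^(k+1) = -(-1)^k := by ring
    rw [h1] at e2
    rw [hR]
    linear_combination e1 + m * e2
  rcases Nat.even_or_odd k with hev | hod
  · have hifn : ¬ (k % 2 = 1) := by
      have := Nat.even_iff.mp hev
      omega
    have hpow : (-1:ℤ)^k = 1 := hev.neg_one_pow
    have hexp : (z k + m * z (k+1)) * p' = (y k + m * y (k+1)) * p + R := by
      rw [hval, hpow]; ring
    rw [hexp, floor_helper p _ R hp (by omega) (by omega), if_neg hifn]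
    exact (sub_zero _).symm
  · have hif : k % 2 = 1 := Nat.odd_iff.mp hod
    have hpow : (-1:ℤ)^k = -1 := hod.neg_one_pow
    have hexp : (z k + m * z (k+1)) * p' = ((y k + m * y (k+1)) - 1) * p + (p - R) := by
      rw [hval, hpow]; ring
    rw [hexp, floor_helper p _ (p - R) hp (by omega) (by omega), if_pos hif]
end

section
/- Let p', p be coprime with 0 < p < p' and 2p < p', and let 2 ≤ a ≤ p'-2 be interfacial in the (p,p')-model, i.e., ⌊(a+1)p/p'⌋ = ⌊(a-1)p/p'⌋ + 1. Set r = ⌊(a+1)p/p'⌋. Then a + r is interfacial in the (p, p'+p)-model, i.e., ⌊(a+r+1)p/(p'+p)⌋ = ⌊(a+r-1)p/(p'+p)⌋ + 1. -/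
theorem stmt17 (p p' a : ℤ) (hp : 0 < p) (hpp' : p < p') (h2p : 2 * p < p')
    (hcop : IsCoprime p p') (ha : 2 ≤ a) (hap' : a ≤ p' - 2)
    (hint : ⌊((a + 1) * p : ℚ) / (p' : ℚ)⌋ = ⌊((a - 1) * p : ℚ) / (p' : ℚ)⌋ + 1) :
    ⌊(((a + ⌊((a + 1) * p : ℚ) / (p' : ℚ)⌋ + 1 : ℤ) : ℚ) * (p : ℚ)) / (((p' + p : ℤ)) : ℚ)⌋
      = ⌊(((a + ⌊((a + 1) * p : ℚ) / (p' : ℚ)⌋ - 1 : ℤ) : ℚ) * (p : ℚ)) / (((p' + p : ℤ)) : ℚ)⌋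
        + 1 := by
  set r : ℤ := ⌊((a + 1) * p : ℚ) / (p' : ℚ)⌋ with hr
  have hp'Q : (0:ℚ) < (p' : ℚ) := by exact_mod_cast hp.trans hpp'
  have hpQ : (0:ℚ) < (p : ℚ) := by exact_mod_cast hp
  have haQ : (2:ℚ) ≤ (a : ℚ) := by exact_mod_cast ha
  have hppQ : (0:ℚ) < ((p' + p : ℤ) : ℚ) := by
    push_cast; linarith
  have h1 : (r : ℚ) ≤ ((a:ℚ)+1) * p / p' := Int.floor_le _
  have h2 : (((a:ℚ)+1) * p) / p' < (r:ℚ) + 1 := Int.lt_floor_add_one _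
  have hint' : ⌊((a - 1) * p : ℚ) / (p' : ℚ)⌋ = r - 1 := by omega
  have h3 : ((r : ℚ) - 1) ≤ ((a:ℚ)-1) * p / p' := by
    have h := Int.floor_le (((a:ℚ)-1) * p / p')
    rw [hint'] at h; push_cast at h; linarith
  have h4 : ((a:ℚ)-1) * p / p' < r := by
    have h := Int.lt_floor_add_one (((a:ℚ)-1) * p / p')
    rw [hint'] at h; push_cast at h; linarith
  -- product form
  have m1 : (r : ℚ) * p' ≤ ((a:ℚ)+1) * p := (le_div_iff₀ hp'Q).mp h1
  have m2 : ((a:ℚ)+1) * p < ((r:ℚ)+1) * p' := (div_lt_iff₀ hp'Q).mp h2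
  have m3 : ((r:ℚ)-1) * p' ≤ ((a:ℚ)-1) * p := (le_div_iff₀ hp'Q).mp h3
  have m4 : ((a:ℚ)-1) * p < (r:ℚ) * p' := (div_lt_iff₀ hp'Q).mp h4
  have eA : ⌊(((a + r + 1 : ℤ) : ℚ) * (p : ℚ)) / (((p' + p : ℤ)) : ℚ)⌋ = r := by
    rw [Int.floor_eq_iff]
    constructor
    · rw [le_div_iff₀ hppQ]; push_cast; nlinarith
    · rw [div_lt_iff₀ hppQ]; push_cast; nlinarith
  have eB : ⌊(((a + r - 1 : ℤ) : ℚ) * (p : ℚ)) / (((p' + p : ℤ)) : ℚ)⌋ = r - 1 := by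
    rw [Int.floor_eq_iff]
    constructor
    · rw [le_div_iff₀ hppQ]; push_cast; nlinarith
    · rw [div_lt_iff₀ hppQ]; push_cast; nlinarith
  rw [eA, eB]; ring
end
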